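/- arXiv:2107.05744 — 2 statements merged into one kernel-verified Lean document; each statement's English description precedes it below -/
import Mathlib

section
/- Let K ⊆ L be finite fields with [L : K] = 2, let H be a one-dimensional K-subspace of L, and let u ∈ L \ H. Then S = u + H is a Sidon set in the multiplicative group L^×. -/
/-!
Write `H = K ∙ θ`, so the elements of `u + H` are `u + sθ` with `s ∈ K`. Since
`(u + sθ)(u + tθ) = u² + (s + t) uθ + st θ²` and `uθ, θ²` are `K`-linearly independent
(they are `u, θ` multiplied by `θ ≠ 0`), a product of two elements of `u + H` determines
`s + t` and `st`, hence the unordered pair `{s, t}`.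
-/

open Module Submodule

theorem Submodule.exists_ne_zero_eq_span_singleton_of_finrank_eq_one {K V : Type*}
    [DivisionRing K] [AddCommGroup V] [Module K V] {H : Submodule K V} (hH : finrank K H = 1) :
    ∃ θ ≠ 0, H = K ∙ θ := by
  have : Module.Finite K H := Module.finite_of_finrank_eq_succ hH
  obtain ⟨θ, hθ⟩ := finrank_pos_iff_exists_ne_zero.mp (hH ▸ Nat.one_pos)
  have hθ0 : (θ : V) ≠ 0 := by simpa using hθ
  exact ⟨θ, hθ0, eq_span_singleton_of_mem_of_finrank_eq_one hH θ.2 hθ0⟩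

theorem eq_and_eq_or_eq_and_eq_of_add_eq_add_of_mul_eq_mul {R : Type*} [CommRing R]
    [NoZeroDivisors R] {a b c d : R} (hsum : a + b = c + d) (hprod : a * b = c * d) :
    a = c ∧ b = d ∨ a = d ∧ b = c := by
  have : (a - c) * (a - d) = 0 := by linear_combination a * hsum - hprod
  rcases mul_eq_zero.mp this with h | h
  · refine .inl ⟨sub_eq_zero.mp h, ?_⟩
    linear_combination hsum - h
  · refine .inr ⟨sub_eq_zero.mp h, ?_⟩
    linear_combination hsum - h

theorem add_eq_add_and_mul_eq_mul_of_mul_eq_mul {K L : Type*} [CommRing K] [CommRing L]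
    [Nontrivial K] [NoZeroDivisors L] [Algebra K L]
    {u θ : L} (hli : LinearIndependent K ![u, θ]) {s t s' t' : K}
    (h : (u + s • θ) * (u + t • θ) = (u + s' • θ) * (u + t' • θ)) :
    s + t = s' + t' ∧ s * t = s' * t' := by
  have hθ : θ ≠ 0 := hli.ne_zero 1
  have hmul : ((s + t - (s' + t')) • u + (s * t - s' * t') • θ) * θ = 0 := by
    simp only [Algebra.smul_def, map_sub, map_add, map_mul] at h ⊢
    linear_combination h
  obtain ⟨hsum, hprod⟩ :=
    LinearIndependent.pair_iff.mp hli _ _ ((mul_eq_zero.mp hmul).resolve_right hθ)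
  exact ⟨sub_eq_zero.mp hsum, sub_eq_zero.mp hprod⟩

theorem bose_sidon_general {K L : Type*} [Field K] [Field L]
    [Algebra K L]
    (H : Submodule K L) (hH : Module.finrank K H = 1)
    (u : L) (hu : u ∉ H) :
    ∀ a ∈ {v : Lˣ | ∃ h ∈ H, (v : L) = u + h},
    ∀ b ∈ {v : Lˣ | ∃ h ∈ H, (v : L) = u + h},
    ∀ c ∈ {v : Lˣ | ∃ h ∈ H, (v : L) = u + h},
    ∀ d ∈ {v : Lˣ | ∃ h ∈ H, (v : L) = u + h},
      a * b = c * d → ({a, b} : Set Lˣ) = {c, d} := by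
  obtain ⟨θ, hθ, rfl⟩ := exists_ne_zero_eq_span_singleton_of_finrank_eq_one hH
  have hli : LinearIndependent K ![u, θ] :=
    linearIndependent_fin2.mpr ⟨hθ, fun s hs => hu (mem_span_singleton.mpr ⟨s, hs⟩)⟩
  simp only [Set.mem_ofPred_eq, mem_span_singleton, exists_exists_eq_and]
  rintro a ⟨s, ha⟩ b ⟨t, hb⟩ c ⟨s', hc⟩ d ⟨t', hd⟩ habcd
  have hprod := congrArg Units.val habcd
  push_cast [ha, hb, hc, hd] at hprod
  obtain ⟨hsum, hmul⟩ := add_eq_add_and_mul_eq_mul_of_mul_eq_mul hli hprod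
  rw [Set.pair_eq_pair_iff]
  rcases eq_and_eq_or_eq_and_eq_of_add_eq_add_of_mul_eq_mul hsum hmul with
    ⟨rfl, rfl⟩ | ⟨rfl, rfl⟩
  · exact .inl ⟨Units.ext (ha.trans hc.symm), Units.ext (hb.trans hd.symm)⟩
  · exact .inr ⟨Units.ext (ha.trans hd.symm), Units.ext (hb.trans hc.symm)⟩

/-- Bose: if `[L : K] = 2`, `H` is a `K`-line in `L` and `u ∉ H`, then
`u + H` is a Sidon set in `L^×`. -/
theorem bose_sidon {K L : Type*} [Field K] [Field L] [Fintype K] [Fintype L]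
    [Algebra K L] (hdim : Module.finrank K L = 2)
    (H : Submodule K L) (hH : Module.finrank K H = 1)
    (u : L) (hu : u ∉ H) :
    ∀ a ∈ {v : Lˣ | ∃ h ∈ H, (v : L) = u + h},
    ∀ b ∈ {v : Lˣ | ∃ h ∈ H, (v : L) = u + h},
    ∀ c ∈ {v : Lˣ | ∃ h ∈ H, (v : L) = u + h},
    ∀ d ∈ {v : Lˣ | ∃ h ∈ H, (v : L) = u + h},
      a * b = c * d → ({a, b} : Set Lˣ) = {c, d} :=
  bose_sidon_general H hH u hu
end

section
/- Let K be a finite field of odd characteristic and φ : K → K a planar function, i.e., for every h ≠ 0 the map x ↦ φ(x+h) − φ(x) is a bijection of K. Then the graph S = {(x, φ(x)) : x ∈ K} is a Sidon set in K², and moreover K² \ (S − S) = ({0} × K) \ {(0,0)}. -/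
open Pointwise

/-!
If `(x, φ x) + (y, φ y) = (z, φ z) + (w, φ w)` with `x ≠ z`, then with `h = x - z` the difference
map `t ↦ φ (t + h) - φ t` takes the same value at `z` and at `y`, so planarity forces `z = y` and
`x = w`. A difference of two graph points with first coordinate `0` comes from a single point, hence
is `0`; for first coordinate `h ≠ 0` the surjectivity of the difference map by `h` produces every
second coordinate.
-/

section

variable {G H : Type*} [AddCommGroup G] [AddCommGroup H]

def IsSidon (S : Set G) : Prop :=
  ∀ a ∈ S, ∀ b ∈ S, ∀ c ∈ S, ∀ d ∈ S, a + b = c + d → ({a, b} : Set G) = {c, d}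

def graph (φ : G → H) : Set (G × H) := {s | ∃ x, s = (x, φ x)}

theorem isSidon_graph {φ : G → H}
    (hφ : ∀ h : G, h ≠ 0 → Function.Injective (fun x => φ (x + h) - φ x)) :
    IsSidon (graph φ) := by
  rintro _ ⟨x, rfl⟩ _ ⟨y, rfl⟩ _ ⟨z, rfl⟩ _ ⟨w, rfl⟩ hsum
  have hfst : x + y = z + w := congrArg Prod.fst hsum
  have hsnd : φ x + φ y = φ z + φ w := congrArg Prod.snd hsum
  by_cases hxz : x = z
  · obtain rfl : y = w := by subst hxz; exact add_left_cancel hfst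
    rw [hxz]
  · have hw : w = y + (x - z) := by rw [add_sub_assoc', add_comm y, hfst, add_sub_cancel_left]
    have hzy : z = y := hφ (x - z) (sub_ne_zero.mpr hxz) <| by
      simp only [add_sub_cancel, ← hw]
      rw [sub_eq_sub_iff_add_eq_add, hsnd, add_comm]
    obtain rfl : x = w := by rw [hw, ← hzy]; abel
    rw [hzy, Set.pair_comm]

theorem mk_mem_graph_sub_graph_of_surjective {φ : G → H} {h : G}
    (hφ : Function.Surjective (fun x => φ (x + h) - φ x)) (v : H) :
    (h, v) ∈ graph φ - graph φ := by
  obtain ⟨y, hy⟩ := hφ v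
  exact ⟨(y + h, φ (y + h)), ⟨y + h, rfl⟩, (y, φ y), ⟨y, rfl⟩,
    Prod.ext (add_sub_cancel_left y h) hy⟩

theorem zero_mk_mem_graph_sub_graph_iff (φ : G → H) (v : H) :
    ((0 : G), v) ∈ graph φ - graph φ ↔ v = 0 := by
  constructor
  · rintro ⟨_, ⟨x, rfl⟩, _, ⟨y, rfl⟩, hxy⟩
    have hfst : x - y = 0 := congrArg Prod.fst hxy
    have hsnd : φ x - φ y = v := congrArg Prod.snd hxy
    rw [← hsnd, sub_eq_zero.mp hfst, sub_self]
  · rintro rfl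
    exact ⟨(0, φ 0), ⟨0, rfl⟩, (0, φ 0), ⟨0, rfl⟩, sub_self _⟩

theorem compl_graph_sub_graph {φ : G → H}
    (hφ : ∀ h : G, h ≠ 0 → Function.Surjective (fun x => φ (x + h) - φ x)) :
    Set.univ \ (graph φ - graph φ) = ({0} ×ˢ (Set.univ : Set H)) \ {(0, 0)} := by
  ext ⟨u, v⟩
  by_cases hu : u = 0
  · subst hu
    simp [zero_mk_mem_graph_sub_graph_iff]
  · simp [hu, mk_mem_graph_sub_graph_of_surjective (hφ u hu)]

end

theorem planar_graph_sidon_general {K : Type*} [Field K]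
    (φ : K → K)
    (hφ : ∀ h : K, h ≠ 0 → Function.Bijective (fun x => φ (x + h) - φ x)) :
    (∀ a ∈ {s : K × K | ∃ x : K, s = (x, φ x)},
     ∀ b ∈ {s : K × K | ∃ x : K, s = (x, φ x)},
     ∀ c ∈ {s : K × K | ∃ x : K, s = (x, φ x)},
     ∀ d ∈ {s : K × K | ∃ x : K, s = (x, φ x)},
        a + b = c + d → ({a, b} : Set (K × K)) = {c, d}) ∧
    (Set.univ : Set (K × K)) \
        ({s : K × K | ∃ x : K, s = (x, φ x)} - {s : K × K | ∃ x : K, s = (x, φ x)})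
      = ({0} ×ˢ (Set.univ : Set K)) \ {(0, 0)} :=
  ⟨isSidon_graph fun h hh => (hφ h hh).1, compl_graph_sub_graph fun h hh => (hφ h hh).2⟩

/-- The graph of a planar function on a finite field of odd characteristic is a
Sidon set in `K²`, and its difference set misses exactly the nonzero points of
the vertical axis. -/
theorem planar_graph_sidon {K : Type*} [Field K] [Fintype K]
    (hodd : Odd (ringChar K))
    (φ : K → K)
    (hφ : ∀ h : K, h ≠ 0 → Function.Bijective (fun x => φ (x + h) - φ x)) :
    (∀ a ∈ {s : K × K | ∃ x : K, s = (x, φ x)},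
     ∀ b ∈ {s : K × K | ∃ x : K, s = (x, φ x)},
     ∀ c ∈ {s : K × K | ∃ x : K, s = (x, φ x)},
     ∀ d ∈ {s : K × K | ∃ x : K, s = (x, φ x)},
        a + b = c + d → ({a, b} : Set (K × K)) = {c, d}) ∧
    (Set.univ : Set (K × K)) \
        ({s : K × K | ∃ x : K, s = (x, φ x)} - {s : K × K | ∃ x : K, s = (x, φ x)})
      = ({0} ×ˢ (Set.univ : Set K)) \ {(0, 0)} :=
  planar_graph_sidon_general φ hφ
end
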